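/- arXiv:1502.04228 — 5 statements merged into one kernel-verified Lean document; each statement's English description precedes it below -/
import Mathlib

section
/- Let (X,d) be a metric space and δ ≥ 0 a constant such that X satisfies the δ-insize condition. Let τ be a geodesic segment in X, let x ∈ X, let p ∈ τ be a projection of x to τ, and assume there is a geodesic from x to p. Then for every q ∈ τ, the Gromov product satisfies (x|q)_p ≤ 4δ, and consequently d(x,q) ≥ d(x,p) + d(p,q) − 8δ. -/
open Metric Set

/-- The Gromov product `(x|y)_w` of `x` and `y` at the basepoint `w`. -/
noncomputable def gromovProd {X : Type*} [MetricSpace X] (w x y : X) : ℝ :=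
  (dist x w + dist y w - dist x y) / 2

/-- `c : ℝ → X` restricted to `[0, l]` is a geodesic from `x` to `y`. -/
def IsGeodesicFrom {X : Type*} [MetricSpace X] (c : ℝ → X) (l : ℝ) (x y : X) : Prop :=
  l = dist x y ∧ c 0 = x ∧ c l = y ∧
    ∀ s ∈ Set.Icc (0:ℝ) l, ∀ t ∈ Set.Icc (0:ℝ) l, dist (c s) (c t) = |s - t|

/-- `p` is a projection of `x` to the subset `A`. -/
def IsProj {X : Type*} [MetricSpace X] (x : X) (A : Set X) (p : X) : Prop :=
  p ∈ A ∧ dist x p = Metric.infDist x A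

/-- The δ-insize condition: for all `a b c` and all geodesics `σ` from `b` to `a` and
`τ` from `b` to `c`, there are points `y₁` on `σ` and `y₂` on `τ` with
`dist y₁ b = (a|c)_b` and `dist y₁ y₂ ≤ 4δ`. -/
def InsizeCond (X : Type*) [MetricSpace X] (δ : ℝ) : Prop :=
  ∀ a b c : X, ∀ σ τ : ℝ → X, ∀ lσ lτ : ℝ,
    IsGeodesicFrom σ lσ b a → IsGeodesicFrom τ lτ b c →
    ∃ y₁ ∈ σ '' Set.Icc 0 lσ, ∃ y₂ ∈ τ '' Set.Icc 0 lτ,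
      dist y₁ b = gromovProd b a c ∧ dist y₁ y₂ ≤ 4 * δ

/-- The δ-four-point condition. -/
def FourPointCond (X : Type*) [MetricSpace X] (δ : ℝ) : Prop :=
  ∀ x y p q : X,
    dist x q + dist y p ≤ max (dist x y + dist p q) (dist x p + dist y q) + 2 * δ

/-- `X` is a geodesic metric space: any two points are joined by a geodesic. -/
def GeodesicMetricSpace (X : Type*) [MetricSpace X] : Prop :=
  ∀ x y : X, ∃ (c : ℝ → X) (l : ℝ), IsGeodesicFrom c l x y

/-- The translation length `ℓ(φ) = inf_{x ∈ X} d(x, φ x)` of an isometry `φ`. -/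
noncomputable def translationLength {X : Type*} [MetricSpace X] (φ : X ≃ᵢ X) : ℝ :=
  ⨅ x : X, dist x (φ x)

/-- The axis `A_φ = {x : d(x, φ x) ≤ max(ℓ(φ), 10δ)}` of an isometry `φ`. -/
def axisSet {X : Type*} [MetricSpace X] (φ : X ≃ᵢ X) (δ : ℝ) : Set X :=
  {x | dist x (φ x) ≤ max (translationLength φ) (10 * δ)}


lemma geodesic_rev {X : Type*} [MetricSpace X] {γ : ℝ → X} {m : ℝ} {x p : X}
    (h : IsGeodesicFrom γ m x p) : IsGeodesicFrom (fun t => γ (m - t)) m p x := by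
  obtain ⟨hm, h0, hl, hd⟩ := h
  refine ⟨hm.trans (dist_comm x p), by simpa using hl, by simpa using h0, ?_⟩
  intro s hs t ht
  have hs' : m - s ∈ Set.Icc (0:ℝ) m := ⟨by linarith [hs.2], by linarith [hs.1]⟩
  have ht' : m - t ∈ Set.Icc (0:ℝ) m := ⟨by linarith [ht.2], by linarith [ht.1]⟩
  have := hd _ hs' _ ht'
  simp only at this ⊢
  rw [this]
  rw [abs_sub_comm]
  congr 1; ring

lemma geodesic_sub {X : Type*} [MetricSpace X] {c : ℝ → X} {l : ℝ} {a b : X}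
    (h : IsGeodesicFrom c l a b) {s₀ t₀ : ℝ} (hs₀ : s₀ ∈ Set.Icc (0:ℝ) l)
    (ht₀ : t₀ ∈ Set.Icc (0:ℝ) l) (hle : s₀ ≤ t₀) :
    IsGeodesicFrom (fun u => c (s₀ + u)) (t₀ - s₀) (c s₀) (c t₀) ∧
      (fun u => c (s₀ + u)) '' Set.Icc 0 (t₀ - s₀) ⊆ c '' Set.Icc 0 l := by
  obtain ⟨hm, h0, hl, hd⟩ := h
  have key : ∀ u ∈ Set.Icc (0:ℝ) (t₀ - s₀), s₀ + u ∈ Set.Icc (0:ℝ) l := by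
    intro u hu
    exact ⟨by linarith [hs₀.1, hu.1], by linarith [ht₀.2, hu.2]⟩
  constructor
  · refine ⟨?_, by simp, by simp, ?_⟩
    · have := hd _ hs₀ _ ht₀
      rw [this, abs_of_nonpos (by linarith)]; ring
    · intro s hs t ht
      have := hd _ (key s hs) _ (key t ht)
      simp only at this ⊢
      rw [this]
      congr 1; ring
  · rintro _ ⟨u, hu, rfl⟩
    exact ⟨s₀ + u, key u hu, rfl⟩

lemma exists_sub {X : Type*} [MetricSpace X] {c : ℝ → X} {l : ℝ} {a b : X}
    (h : IsGeodesicFrom c l a b) {s₀ t₀ : ℝ} (hs₀ : s₀ ∈ Set.Icc (0:ℝ) l)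
    (ht₀ : t₀ ∈ Set.Icc (0:ℝ) l) :
    ∃ (τ : ℝ → X) (L : ℝ), IsGeodesicFrom τ L (c s₀) (c t₀) ∧
      τ '' Set.Icc 0 L ⊆ c '' Set.Icc 0 l := by
  rcases le_total s₀ t₀ with hle | hle
  · obtain ⟨hg, hsub⟩ := geodesic_sub h hs₀ ht₀ hle
    exact ⟨_, _, hg, hsub⟩
  · obtain ⟨hg, hsub⟩ := geodesic_sub h ht₀ hs₀ hle
    refine ⟨_, _, geodesic_rev hg, ?_⟩
    rintro _ ⟨u, hu, rfl⟩
    refine hsub ⟨s₀ - t₀ - u, ⟨by linarith [hu.2], by linarith [hu.1]⟩, rfl⟩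

/-- In a space satisfying the δ-insize condition, if `p` is a projection
of `x` to a geodesic segment `τ` (joined to `x` by a geodesic), then for every `q ∈ τ`,
`(x|q)_p ≤ 4δ`, and hence `d(x,q) ≥ d(x,p) + d(p,q) − 8δ`. -/
theorem stmt0 {X : Type*} [MetricSpace X] (δ : ℝ) (hδ : 0 ≤ δ)
    (hins : InsizeCond X δ)
    (c : ℝ → X) (l : ℝ) (a b : X) (hτ : IsGeodesicFrom c l a b)
    (x p : X) (hp : IsProj x (c '' Set.Icc 0 l) p)
    (hxp : ∃ (γ : ℝ → X) (m : ℝ), IsGeodesicFrom γ m x p)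
    (q : X) (hq : q ∈ c '' Set.Icc 0 l) :
    gromovProd p x q ≤ 4 * δ ∧ dist x p + dist p q - 8 * δ ≤ dist x q := by
  obtain ⟨γ, m, hγ⟩ := hxp
  obtain ⟨s₀, hs₀, hcs₀⟩ := hp.1
  obtain ⟨t₀, ht₀, hct₀⟩ := hq
  obtain ⟨τ', L, hτ', hsub⟩ := exists_sub hτ hs₀ ht₀
  rw [hcs₀, hct₀] at hτ'
  have hσ := geodesic_rev hγ
  obtain ⟨y₁, hy₁mem, y₂, hy₂mem, hy₁p, hy₁y₂⟩ := hins x p q _ τ' m L hσ hτ'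
  -- y₁ lies on the geodesic from p to x
  obtain ⟨u, hu, hy₁⟩ := hy₁mem
  have hu' : dist y₁ p = u := by
    rw [← hy₁]
    have := hσ.2.2.2 u hu 0 ⟨le_refl 0, by rw [hσ.1]; exact dist_nonneg⟩
    rw [hσ.2.1] at this
    rw [this, sub_zero, abs_of_nonneg hu.1]
  have hxy₁ : dist x y₁ = dist x p - u := by
    rw [← hy₁]
    have := hσ.2.2.2 m ⟨by rw [hσ.1]; exact dist_nonneg, le_refl m⟩ u hu
    rw [hσ.2.2.1] at this
    rw [this, abs_of_nonneg (by linarith [hu.2]), hσ.1, dist_comm p x]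
  have hinf : dist x p ≤ dist x y₂ := by
    rw [hp.2]
    exact Metric.infDist_le_dist_of_mem (hsub hy₂mem)
  have hg : gromovProd p x q ≤ 4 * δ := by
    have h1 : dist x y₂ ≤ dist x y₁ + dist y₁ y₂ := dist_triangle _ _ _
    have h2 : gromovProd p x q = u := by rw [← hy₁p, hu']
    linarith
  refine ⟨hg, ?_⟩
  have : gromovProd p x q = (dist x p + dist q p - dist x q) / 2 := rfl
  rw [dist_comm q p] at this
  linarith
end

section
/- Let (X,d) be a geodesic metric space and δ ≥ 0 a constant such that X satisfies both the δ-four-point condition and the δ-insize condition. Let τ be a geodesic segment in X, let p and q be projections to τ of points x and y respectively, and suppose d(p,q) > 9δ. Then d(x,y) ≥ d(x,p) + d(p,q) + d(q,y) − 18δ. -/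
open Metric Set

lemma proj_gromov {X : Type*} [MetricSpace X] (δ : ℝ)
    (hgeo : GeodesicMetricSpace X) (hins : InsizeCond X δ)
    (c : ℝ → X) (l : ℝ) (a b : X) (hτ : IsGeodesicFrom c l a b)
    (x p q : X) (hp : IsProj x (c '' Set.Icc 0 l) p) (hq : q ∈ c '' Set.Icc 0 l) :
    dist x p + dist p q - 8 * δ ≤ dist x q := by
  obtain ⟨hl, hc0, hcl, hiso⟩ := hτ
  obtain ⟨hpA, hpd⟩ := hp
  obtain ⟨sp, hsp, hps⟩ := hpA
  obtain ⟨sq, hsq, hqs⟩ := hq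
  obtain ⟨σ, lσ, hσ⟩ := hgeo p x
  have hdpq : dist p q = |sq - sp| := by
    rw [← hps, ← hqs, hiso sp hsp sq hsq, abs_sub_comm]
  have hsub : ∃ τ' : ℝ → X, IsGeodesicFrom τ' (dist p q) p q ∧
      ∀ v ∈ Set.Icc (0:ℝ) (dist p q), τ' v ∈ c '' Set.Icc 0 l := by
    rcases le_total sp sq with hle | hle
    · have habs : |sq - sp| = sq - sp := abs_of_nonneg (by linarith)
      refine ⟨fun u => c (sp + u), ⟨?_, by simpa using hps, ?_, ?_⟩, ?_⟩
      · rfl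
      · rw [hdpq, habs]; simpa using hqs
      · intro s hs t ht
        rw [hdpq, habs] at hs ht
        rw [hiso _ ⟨by linarith [hs.1, hsp.1], by linarith [hs.2, hsq.2]⟩
              _ ⟨by linarith [ht.1, hsp.1], by linarith [ht.2, hsq.2]⟩]
        ring_nf
      · intro v hv
        rw [hdpq, habs] at hv
        exact ⟨sp + v, ⟨by linarith [hv.1, hsp.1], by linarith [hv.2, hsq.2]⟩, rfl⟩
    · have habs : |sq - sp| = sp - sq := by rw [abs_sub_comm]; exact abs_of_nonneg (by linarith)
      refine ⟨fun u => c (sp - u), ⟨?_, by simpa using hps, ?_, ?_⟩, ?_⟩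
      · rfl
      · rw [hdpq, habs]; simpa using hqs
      · intro s hs t ht
        rw [hdpq, habs] at hs ht
        rw [hiso _ ⟨by linarith [hs.2, hsq.1], by linarith [hs.1, hsp.2]⟩
              _ ⟨by linarith [ht.2, hsq.1], by linarith [ht.1, hsp.2]⟩]
        rw [show sp - s - (sp - t) = -(s - t) by ring, abs_neg]
      · intro v hv
        rw [hdpq, habs] at hv
        exact ⟨sp - v, ⟨by linarith [hv.2, hsq.1], by linarith [hv.1, hsp.2]⟩, rfl⟩
  obtain ⟨τ', hτ', hτ'sub⟩ := hsub
  obtain ⟨y₁, ⟨u, hu, hy₁⟩, y₂, ⟨v, hv, hy₂⟩, hgp, hclose⟩ :=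
    hins x p q σ τ' lσ (dist p q) hσ hτ'
  obtain ⟨hlσ, hσ0, hσl, hσiso⟩ := hσ
  have hlσ0 : 0 ≤ lσ := hlσ ▸ dist_nonneg
  have hu1 : dist y₁ p = u := by
    rw [← hy₁, ← hσ0, hσiso u hu 0 ⟨le_refl 0, hlσ0⟩]
    simpa using abs_of_nonneg hu.1
  have hxy₁ : dist x y₁ = lσ - u := by
    rw [← hy₁, ← hσl, hσiso lσ ⟨hlσ0, le_refl _⟩ u hu, abs_of_nonneg (by linarith [hu.2])]
  have hxp : dist x p ≤ dist x y₂ := by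
    rw [hpd]
    exact infDist_le_dist_of_mem (hy₂ ▸ hτ'sub v hv)
  have htri : dist x y₂ ≤ dist x y₁ + dist y₁ y₂ := dist_triangle x y₁ y₂
  rw [hu1] at hgp
  unfold gromovProd at hgp
  have h1 := dist_comm p x
  have h2 := dist_comm q p
  have h3 := dist_comm x q
  linarith

/-- In a geodesic space satisfying the δ-four-point and δ-insize
conditions, if `p, q` are projections of `x, y` to a geodesic segment `τ` and
`d(p,q) > 9δ`, then `d(x,y) ≥ d(x,p) + d(p,q) + d(q,y) − 18δ`. -/
theorem stmt1 {X : Type*} [MetricSpace X] (δ : ℝ) (hδ : 0 ≤ δ)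
    (hgeo : GeodesicMetricSpace X)
    (hfour : FourPointCond X δ) (hins : InsizeCond X δ)
    (c : ℝ → X) (l : ℝ) (a b : X) (hτ : IsGeodesicFrom c l a b)
    (x y p q : X)
    (hp : IsProj x (c '' Set.Icc 0 l) p) (hq : IsProj y (c '' Set.Icc 0 l) q)
    (hpq : dist p q > 9 * δ) :
    dist x p + dist p q + dist q y - 18 * δ ≤ dist x y := by
  have h1 := proj_gromov δ hgeo hins c l a b hτ x p q hp hq.1
  have h2 := proj_gromov δ hgeo hins c l a b hτ y q p hq hp.1
  have h4 := hfour x y p q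
  rcases max_cases (dist x y + dist p q) (dist x p + dist y q) with ⟨he, _⟩ | ⟨he, _⟩ <;>
    rw [he] at h4 <;>
    linarith [dist_comm p q, dist_comm q y, dist_comm x q, dist_comm y p]
end

section
/- Let (X,d) be a geodesic metric space and δ ≥ 0 a constant such that X satisfies the δ-insize condition. Let τ be a geodesic segment in X and let p and q be projections to τ of points x and y respectively. Then d(x,p) + d(y,q) + 2·d(p,q) − 16δ ≤ d(x,q) + d(y,p). -/
open Metric Set

private lemma subseg {X : Type*} [MetricSpace X] (c : ℝ → X) (l : ℝ)
    (hc : ∀ s ∈ Set.Icc (0:ℝ) l, ∀ t ∈ Set.Icc (0:ℝ) l, dist (c s) (c t) = |s - t|)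
    {s t : ℝ} (hs : s ∈ Set.Icc (0:ℝ) l) (ht : t ∈ Set.Icc (0:ℝ) l) :
    ∃ (τ : ℝ → X) (lτ : ℝ), IsGeodesicFrom τ lτ (c s) (c t) ∧
      τ '' Set.Icc 0 lτ ⊆ c '' Set.Icc 0 l := by
  rcases le_total s t with h | h
  · refine ⟨fun u => c (s + u), t - s, ⟨?_, by simp, congrArg c (by ring), ?_⟩, ?_⟩
    · rw [hc s hs t ht, abs_sub_comm, abs_of_nonneg (by linarith)]
    · intro u hu v hv
      have hu' : s + u ∈ Set.Icc (0:ℝ) l := ⟨by linarith [hu.1, hs.1], by linarith [hu.2, ht.2]⟩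
      have hv' : s + v ∈ Set.Icc (0:ℝ) l := ⟨by linarith [hv.1, hs.1], by linarith [hv.2, ht.2]⟩
      rw [hc _ hu' _ hv', show s + u - (s + v) = u - v by ring]
    · rintro _ ⟨u, hu, rfl⟩
      exact ⟨s + u, ⟨by linarith [hu.1, hs.1], by linarith [hu.2, ht.2]⟩, rfl⟩
  · refine ⟨fun u => c (s - u), s - t, ⟨?_, by simp, congrArg c (by ring), ?_⟩, ?_⟩
    · rw [hc s hs t ht, abs_of_nonneg (by linarith)]
    · intro u hu v hv
      have hu' : s - u ∈ Set.Icc (0:ℝ) l := ⟨by linarith [hu.2, ht.1], by linarith [hu.1, hs.2]⟩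
      have hv' : s - v ∈ Set.Icc (0:ℝ) l := ⟨by linarith [hv.2, ht.1], by linarith [hv.1, hs.2]⟩
      rw [hc _ hu' _ hv', show s - u - (s - v) = -(u - v) by ring, abs_neg]
    · rintro _ ⟨u, hu, rfl⟩
      exact ⟨s - u, ⟨by linarith [hu.2, ht.1], by linarith [hu.1, hs.2]⟩, rfl⟩

private lemma proj_key {X : Type*} [MetricSpace X] (δ : ℝ)
    (hgeo : GeodesicMetricSpace X) (hins : InsizeCond X δ)
    (c : ℝ → X) (l : ℝ)
    (hc : ∀ s ∈ Set.Icc (0:ℝ) l, ∀ t ∈ Set.Icc (0:ℝ) l, dist (c s) (c t) = |s - t|)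
    (x p z : X) (hp : IsProj x (c '' Set.Icc 0 l) p) (hz : z ∈ c '' Set.Icc 0 l) :
    dist x p + dist p z ≤ dist x z + 8 * δ := by
  obtain ⟨⟨sp, hsp, rfl⟩, hpd⟩ := hp
  obtain ⟨sz, hsz, rfl⟩ := hz
  obtain ⟨τ', lτ, hτ', hsub⟩ := subseg c l hc hsp hsz
  obtain ⟨σ, lσ, hσ⟩ := hgeo (c sp) x
  obtain ⟨y₁, ⟨u, hu, rfl⟩, y₂, hy₂, hgp, hclose⟩ :=
    hins x (c sp) (c sz) σ τ' lσ lτ hσ hτ'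
  have hlσ : lσ = dist (c sp) x := hσ.1
  have h0lσ : (0:ℝ) ≤ lσ := hlσ ▸ dist_nonneg
  have hd1 : dist (σ u) (c sp) = u := by
    rw [← hσ.2.1, hσ.2.2.2 u hu 0 ⟨le_rfl, h0lσ⟩, sub_zero, abs_of_nonneg hu.1]
  have hd2 : dist x (σ u) = lσ - u := by
    rw [← hσ.2.2.1, hσ.2.2.2 lσ ⟨h0lσ, le_rfl⟩ u hu, abs_of_nonneg (by linarith [hu.2])]
  have hproj : dist x (c sp) ≤ dist x y₂ := by
    rw [hpd]; exact Metric.infDist_le_dist_of_mem (hsub hy₂)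
  have htri : dist x y₂ ≤ dist x (σ u) + dist (σ u) y₂ := dist_triangle _ _ _
  have hcomm : dist (c sp) x = dist x (c sp) := dist_comm _ _
  have hcomm2 : dist (c sz) (c sp) = dist (c sp) (c sz) := dist_comm _ _
  rw [hd1] at hgp
  unfold gromovProd at hgp
  linarith [hd2, hclose]

/-- In a geodesic space satisfying the δ-insize condition, if `p, q` are
projections of `x, y` to a geodesic segment `τ`, then
`d(x,p) + d(y,q) + 2·d(p,q) − 16δ ≤ d(x,q) + d(y,p)`. -/
theorem stmt2 {X : Type*} [MetricSpace X] (δ : ℝ) (hδ : 0 ≤ δ)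
    (hgeo : GeodesicMetricSpace X) (hins : InsizeCond X δ)
    (c : ℝ → X) (l : ℝ) (a b : X) (hτ : IsGeodesicFrom c l a b)
    (x y p q : X)
    (hp : IsProj x (c '' Set.Icc 0 l) p) (hq : IsProj y (c '' Set.Icc 0 l) q) :
    dist x p + dist y q + 2 * dist p q - 16 * δ ≤ dist x q + dist y p := by
  have h1 := proj_key δ hgeo hins c l hτ.2.2.2 x p q hp hq.1
  have h2 := proj_key δ hgeo hins c l hτ.2.2.2 y q p hq hp.1
  have := dist_comm p q
  linarith
end

section
/- Let (X,d) be a geodesic metric space and δ > 0 a constant such that X satisfies both the δ-four-point condition and the δ-insize condition. Let φ be an isometry of X whose axis A_φ is nonempty, and assume that every point of X admits a projection to A_φ. Then for every x ∈ X, 2·d(x, A_φ) + ℓ(φ) − 18δ ≤ d(x, φ(x)) ≤ 2·d(x, A_φ) + max(ℓ(φ), 10δ). -/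
open Metric Set

/-- In a geodesic space satisfying the δ-four-point and δ-insize
conditions, if `φ` is an isometry with nonempty axis `A_φ` such that every point admits
a projection to `A_φ`, then for every `x`,
`2·d(x, A_φ) + ℓ(φ) − 18δ ≤ d(x, φ(x)) ≤ 2·d(x, A_φ) + max(ℓ(φ), 10δ)`. -/
theorem stmt4 {X : Type*} [MetricSpace X] (δ : ℝ) (hδ : 0 < δ)
    (hgeo : GeodesicMetricSpace X)
    (hfour : FourPointCond X δ) (hins : InsizeCond X δ)
    (φ : X ≃ᵢ X) (hne : (axisSet φ δ).Nonempty)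
    (hproj : ∀ x : X, ∃ p : X, IsProj x (axisSet φ δ) p)
    (x : X) :
    2 * Metric.infDist x (axisSet φ δ) + translationLength φ - 18 * δ ≤ dist x (φ x) ∧
    dist x (φ x) ≤ 2 * Metric.infDist x (axisSet φ δ) +
      max (translationLength φ) (10 * δ) := by
  classical
  obtain ⟨p, hpA, hpd⟩ := hproj x
  have hbdd : BddBelow (Set.range fun y : X => dist y (φ y)) :=
    ⟨0, by rintro _ ⟨y, rfl⟩; exact dist_nonneg⟩
  have hlD : translationLength φ ≤ dist p (φ p) := ciInf_le hbdd p
  have hlx : translationLength φ ≤ dist x (φ x) := ciInf_le hbdd x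
  have hDM : dist p (φ p) ≤ max (translationLength φ) (10 * δ) := hpA
  have h10M : 10 * δ ≤ max (translationLength φ) (10 * δ) := le_max_right _ _
  -- auxiliary: projections see suitable points at large distance
  have aux : ∀ q : X, (∀ z : X, dist z (φ z) ≤ dist z p + dist z q) →
      dist p q ≤ max (translationLength φ) (10 * δ) →
      dist x p + dist p q - 8 * δ ≤ dist x q := by
    intro q hq1 hq2
    obtain ⟨σ, lσ, hσ⟩ := hgeo p x
    obtain ⟨τ, lτ, hτ⟩ := hgeo p q
    obtain ⟨y₁, ⟨s, hs, rfl⟩, y₂, ⟨u, hu, rfl⟩, hg, h4⟩ :=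
      hins x p q σ τ lσ lτ hσ hτ
    obtain ⟨h1, h2, h3, h5⟩ := hσ
    obtain ⟨k1, k2, k3, k5⟩ := hτ
    have hlσ0 : (0:ℝ) ≤ lσ := by rw [h1]; exact dist_nonneg
    have hlτ0 : (0:ℝ) ≤ lτ := by rw [k1]; exact dist_nonneg
    have hds : dist (σ s) p = s := by
      have h := h5 s hs 0 ⟨le_rfl, hlσ0⟩
      rw [h2] at h
      rw [h, sub_zero, abs_of_nonneg hs.1]
    have hdsx : dist (σ s) x = lσ - s := by
      have h := h5 s hs lσ ⟨hlσ0, le_rfl⟩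
      rw [h3] at h
      rw [h, abs_of_nonpos (by linarith [hs.2])]
      ring
    have hdu : dist (τ u) p = u := by
      have h := k5 u hu 0 ⟨le_rfl, hlτ0⟩
      rw [k2] at h
      rw [h, sub_zero, abs_of_nonneg hu.1]
    have hduq : dist (τ u) q = lτ - u := by
      have h := k5 u hu lτ ⟨hlτ0, le_rfl⟩
      rw [k3] at h
      rw [h, abs_of_nonpos (by linarith [hu.2])]
      ring
    have hmem : τ u ∈ axisSet φ δ := by
      show dist (τ u) (φ (τ u)) ≤ max (translationLength φ) (10 * δ)
      calc dist (τ u) (φ (τ u)) ≤ dist (τ u) p + dist (τ u) q := hq1 _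
        _ = lτ := by rw [hdu, hduq]; ring
        _ = dist p q := k1
        _ ≤ max (translationLength φ) (10 * δ) := hq2
    have hinf : dist x p ≤ dist x (τ u) := by
      rw [hpd]; exact Metric.infDist_le_dist_of_mem hmem
    have hchain : dist x (τ u) ≤ (lσ - s) + 4 * δ := by
      calc dist x (τ u) ≤ dist x (σ s) + dist (σ s) (τ u) := dist_triangle _ _ _
        _ ≤ (lσ - s) + 4 * δ := by
            rw [dist_comm x (σ s), hdsx]; linarith [h4]
    have hs4 : s ≤ 4 * δ := by
      have : lσ = dist x p := by rw [h1, dist_comm]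
      linarith
    have hgv : s = (dist x p + dist q p - dist x q) / 2 := by
      rw [← hds, hg]; rfl
    have := dist_comm q p
    linarith
  -- the two applications of aux
  have e0 : dist p (φ.symm p) = dist p (φ p) := by
    calc dist p (φ.symm p) = dist (φ p) (φ (φ.symm p)) := (φ.dist_eq _ _).symm
      _ = dist (φ p) p := by rw [φ.apply_symm_apply]
      _ = dist p (φ p) := dist_comm _ _
  have hF4 : dist x p + dist p (φ p) - 8 * δ ≤ dist x (φ.symm p) := by
    have h := aux (φ.symm p) ?_ ?_
    · rwa [e0] at h
    · intro z
      have hz : dist p (φ z) = dist z (φ.symm p) := by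
        calc dist p (φ z) = dist (φ (φ.symm p)) (φ z) := by rw [φ.apply_symm_apply]
          _ = dist (φ.symm p) z := φ.dist_eq _ _
          _ = dist z (φ.symm p) := dist_comm _ _
      calc dist z (φ z) ≤ dist z p + dist p (φ z) := dist_triangle _ _ _
        _ = dist z p + dist z (φ.symm p) := by rw [hz]
    · rw [e0]; exact hDM
  have hF5 : dist x p + dist p (φ p) - 8 * δ ≤ dist x (φ p) := by
    refine aux (φ p) (fun z => ?_) hDM
    calc dist z (φ z) ≤ dist z (φ p) + dist (φ p) (φ z) := dist_triangle _ _ _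
      _ = dist z (φ p) + dist p z := by rw [φ.dist_eq]
      _ = dist z p + dist z (φ p) := by rw [dist_comm p z]; ring
  -- upper bound (holds always)
  have hub : dist x (φ x) ≤ 2 * Metric.infDist x (axisSet φ δ) +
      max (translationLength φ) (10 * δ) := by
    have t1 : dist x (φ x) ≤ dist x (φ p) + dist (φ p) (φ x) := dist_triangle _ _ _
    have t2 : dist x (φ p) ≤ dist x p + dist p (φ p) := dist_triangle _ _ _
    have t3 : dist (φ p) (φ x) = dist p x := φ.dist_eq _ _
    have t4 := dist_comm p x
    linarith [hpd.symm.le, hpd.le, hDM]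
  refine ⟨?_, hub⟩
  rcases eq_or_lt_of_le (dist_nonneg : (0:ℝ) ≤ dist x p) with hk0 | hkpos
  · -- x is at distance 0 from the axis
    have : Metric.infDist x (axisSet φ δ) = 0 := by rw [← hpd, ← hk0]
    rw [this]
    linarith
  · -- main case: here dist p (φ p) = max(ℓ, 10δ)
    have hMD : max (translationLength φ) (10 * δ) ≤ dist p (φ p) := by
      by_contra h
      push_neg at h
      obtain ⟨c, l, hc⟩ := hgeo p x
      obtain ⟨c1, c2, c3, c5⟩ := hc
      have hl0 : 0 < l := by rw [c1, dist_comm]; exact hkpos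
      set t := min l ((max (translationLength φ) (10 * δ) - dist p (φ p)) / 2) with ht
      have ht0 : 0 < t := lt_min hl0 (by linarith)
      have htl : t ≤ l := min_le_left _ _
      have htm : t ∈ Set.Icc 0 l := ⟨ht0.le, htl⟩
      have hzp : dist (c t) p = t := by
        have h' := c5 t htm 0 ⟨le_rfl, hl0.le⟩
        rw [c2] at h'
        rw [h', sub_zero, abs_of_nonneg ht0.le]
      have hzx : dist (c t) x = l - t := by
        have h' := c5 t htm l ⟨hl0.le, le_rfl⟩
        rw [c3] at h'
        rw [h', abs_of_nonpos (by linarith)]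
        ring
      have hmem : c t ∈ axisSet φ δ := by
        show dist (c t) (φ (c t)) ≤ max (translationLength φ) (10 * δ)
        have u1 : dist (c t) (φ (c t)) ≤ dist (c t) p + dist p (φ (c t)) :=
          dist_triangle _ _ _
        have u2 : dist p (φ (c t)) ≤ dist p (φ p) + dist (φ p) (φ (c t)) :=
          dist_triangle _ _ _
        have u3 : dist (φ p) (φ (c t)) = dist p (c t) := φ.dist_eq _ _
        have u4 : dist p (c t) = t := by rw [dist_comm]; exact hzp
        have u5 : t ≤ (max (translationLength φ) (10 * δ) - dist p (φ p)) / 2 :=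
          min_le_right _ _
        linarith
      have : dist x p ≤ l - t := by
        rw [hpd]
        calc Metric.infDist x (axisSet φ δ) ≤ dist x (c t) :=
              Metric.infDist_le_dist_of_mem hmem
          _ = l - t := by rw [dist_comm]; exact hzx
      have hlxp : l = dist x p := by rw [c1, dist_comm]
      linarith
    -- four-point condition
    have hfour' := hfour x (φ x) p (φ p)
    have e1 : dist (φ x) (φ p) = dist x p := φ.dist_eq _ _
    have e2 : dist (φ x) p = dist x (φ.symm p) := by
      calc dist (φ x) p = dist (φ x) (φ (φ.symm p)) := by rw [φ.apply_symm_apply]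
        _ = dist x (φ.symm p) := φ.dist_eq _ _
    rw [e1, e2] at hfour'
    have hinfd : Metric.infDist x (axisSet φ δ) = dist x p := hpd.symm
    rw [hinfd]
    rcases le_or_gt (dist x (φ x) + dist p (φ p)) (dist x p + dist x p) with hmax | hmax
    · exfalso
      rw [max_eq_right hmax] at hfour'
      linarith
    · rw [max_eq_left hmax.le] at hfour'
      linarith
end

section
/- Let (X,d) be a geodesic metric space, δ ≥ 0 a constant, and φ an isometry of X with axis A_φ. Let x ∈ X with x ∉ A_φ and let y be a projection of x to A_φ. Then d(y, φ(y)) = max(ℓ(φ), 10δ). -/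
open Metric Set

/-- In a geodesic metric space, if `x ∉ A_φ` and `y` is a projection of
`x` to the axis `A_φ`, then `d(y, φ(y)) = max(ℓ(φ), 10δ)`. -/
theorem stmt9 {X : Type*} [MetricSpace X] (δ : ℝ) (hδ : 0 ≤ δ)
    (hgeo : GeodesicMetricSpace X) (φ : X ≃ᵢ X)
    (x y : X) (hx : x ∉ axisSet φ δ) (hy : IsProj x (axisSet φ δ) y) :
    dist y (φ y) = max (translationLength φ) (10 * δ) := by
  set M := max (translationLength φ) (10 * δ) with hM
  obtain ⟨hyA, hxy⟩ := hy
  refine le_antisymm hyA ?_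
  by_contra hlt
  push_neg at hlt
  -- d(x,y) > 0 since x ∉ A
  have hxy0 : 0 < dist x y := by
    rcases eq_or_lt_of_le (dist_nonneg : (0:ℝ) ≤ dist x y) with h | h
    · exfalso; apply hx
      have : x = y := by rwa [eq_comm, dist_eq_zero] at h
      rwa [this]
    · exact h
  obtain ⟨c, l, hl, hc0, hcl, hdist⟩ := hgeo x y
  have hl0 : 0 < l := hl ▸ hxy0
  set ε : ℝ := min l ((M - dist y (φ y)) / 2) with hε
  have hε0 : 0 < ε := lt_min hl0 (by linarith)
  have hεl : ε ≤ l := min_le_left _ _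
  have hε2 : 2 * ε ≤ M - dist y (φ y) := by
    have := min_le_right l ((M - dist y (φ y)) / 2)
    linarith
  set z := c (l - ε) with hz
  have hmem : l - ε ∈ Set.Icc (0:ℝ) l := ⟨by linarith, by linarith⟩
  have hmem0 : (0:ℝ) ∈ Set.Icc (0:ℝ) l := ⟨le_rfl, le_of_lt hl0⟩
  have hmeml : l ∈ Set.Icc (0:ℝ) l := ⟨le_of_lt hl0, le_rfl⟩
  have hzy : dist z y = ε := by
    have := hdist (l - ε) hmem l hmeml
    rw [hcl] at this
    rw [hz, this]
    rw [abs_of_nonpos (by linarith)]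
    ring
  have hxz : dist x z = l - ε := by
    have := hdist 0 hmem0 (l - ε) hmem
    rw [hc0] at this
    rw [hz, this, abs_of_nonpos (by linarith)]
    ring
  have hzA : z ∈ axisSet φ δ := by
    have h1 : dist z (φ z) ≤ dist z y + dist y (φ y) + dist (φ y) (φ z) :=
      dist_triangle4 z y (φ y) (φ z)
    have h2 : dist (φ y) (φ z) = dist y z := φ.dist_eq y z
    rw [h2, dist_comm y z, hzy] at h1
    show dist z (φ z) ≤ M
    linarith
  have : Metric.infDist x (axisSet φ δ) ≤ dist x z := Metric.infDist_le_dist_of_mem hzA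
  rw [hxz] at this
  rw [← hxy, ← hl] at this  -- hxy : dist x y = infDist
  linarith
end
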